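/- arXiv:2311.07752 — 4 statements merged into one kernel-verified Lean document; each statement's English description precedes it below -/
import Mathlib

section
/- Under the saturated marginal structural model setup, if λ₀ is strictly positive on a set of positive Lebesgue measure, then there exists a unique β* ∈ ℝ with h(β*) = 0; that is, the population full-data estimating equation ∫₀^τ {ℰ(β(t),t) − ℰ(β*,t)}·(f₀(t)+f₁(t)) dt = 0 has exactly one real solution β* (the time-averaged log hazard ratio). -/
/-!
With the cumulative hazards `Λₐ(t) = ∫₀ᵗ e^{β(u)a} λ₀(u) du`, `ℰ(b,t)` is the logistic function
`σ(b + θ(t))`, `θ = Λ₀ - Λ₁`, so `h(b) = C - G(b)` with `G(b) = ∫ σ(b + θ) w`,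
`C = ∫ σ(β + θ) w` and `w = f₀ + f₁ ≥ 0`. By dominated convergence `G` is continuous with limits `0` at `-∞` and `∫ w`
at `+∞`; it is strictly increasing, and `0 < C < ∫ w`, because `0 < σ < 1` and `w > 0` on the
set of positive measure where `λ₀ > 0`. The intermediate value theorem gives the unique root.
-/

open MeasureTheory Filter

/-- Potential-outcome survival function `S_a(t) = exp(-∫₀ᵗ e^{β(u)·a} λ₀(u) du)`. -/
noncomputable def Ssurv (lam0 bet : ℝ → ℝ) (a t : ℝ) : ℝ :=
  Real.exp (-(∫ u in (0:ℝ)..t, Real.exp (bet u * a) * lam0 u))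

/-- Potential-outcome density `f_a(t) = e^{β(t)·a} λ₀(t) S_a(t)`. -/
noncomputable def fdens (lam0 bet : ℝ → ℝ) (a t : ℝ) : ℝ :=
  Real.exp (bet t * a) * lam0 t * Ssurv lam0 bet a t

/-- `ℰ(b,t) = e^b S₁(t) / (S₀(t) + e^b S₁(t))`. -/
noncomputable def Efun (lam0 bet : ℝ → ℝ) (b t : ℝ) : ℝ :=
  Real.exp b * Ssurv lam0 bet 1 t /
    (Ssurv lam0 bet 0 t + Real.exp b * Ssurv lam0 bet 1 t)

/-- Population full-data estimating function
`h(b) = ∫₀^τ (ℰ(β(t),t) - ℰ(b,t)) (f₀(t) + f₁(t)) dt`. -/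
noncomputable def hfun (τ : ℝ) (lam0 bet : ℝ → ℝ) (b : ℝ) : ℝ :=
  ∫ t in (0:ℝ)..τ,
    (Efun lam0 bet (bet t) t - Efun lam0 bet b t) *
      (fdens lam0 bet 0 t + fdens lam0 bet 1 t)

open Topology Real

section LogisticEstimatingEquation

variable {α : Type*} [MeasurableSpace α] {μ : Measure α} {w : α → ℝ}

theorem integral_mul_lt_integral_mul {f g : α → ℝ} (hw : 0 ≤ᵐ[μ] w)
    (hsupp : 0 < μ (Function.support w)) (hfg : ∀ t, f t < g t)
    (hf : Integrable (fun t => f t * w t) μ) (hg : Integrable (fun t => g t * w t) μ) :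
    ∫ t, f t * w t ∂μ < ∫ t, g t * w t ∂μ := by
  have hsupp_eq : Function.support (fun t => g t * w t - f t * w t) = Function.support w := by
    ext t
    simp only [Function.mem_support, ← sub_mul, mul_ne_zero_iff, sub_ne_zero,
      (hfg t).ne', true_and, ne_eq, not_false_eq_true]
  rw [← sub_pos, ← integral_sub hg hf,
    integral_pos_iff_support_of_nonneg_ae (f := fun t => g t * w t - f t * w t) _ (hg.sub hf),
    hsupp_eq]
  · exact hsupp
  · filter_upwards [hw] with t ht
    simpa only [Pi.zero_apply, ← sub_mul] using mul_nonneg (sub_nonneg.2 (hfg t).le) ht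

theorem norm_sigmoid_mul_le {x y : ℝ} (hy : 0 ≤ y) : ‖sigmoid x * y‖ ≤ y := by
  rw [Real.norm_eq_abs, abs_of_nonneg (mul_nonneg (sigmoid_nonneg x) hy)]
  exact mul_le_of_le_one_left hy (sigmoid_le_one x)

theorem aestronglyMeasurable_sigmoid_comp_mul {f : α → ℝ} (hf : AEStronglyMeasurable f μ)
    (hw : AEStronglyMeasurable w μ) :
    AEStronglyMeasurable (fun t => sigmoid (f t) * w t) μ :=
  (continuous_sigmoid.comp_aestronglyMeasurable hf).mul hw

theorem integrable_sigmoid_comp_mul {f : α → ℝ} (hf : AEStronglyMeasurable f μ)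
    (hw : Integrable w μ) : Integrable (fun t => sigmoid (f t) * w t) μ :=
  hw.bdd_mul (c := 1) (continuous_sigmoid.comp_aestronglyMeasurable hf)
    (Eventually.of_forall fun t => by
      rw [Real.norm_eq_abs, abs_of_pos (sigmoid_pos _)]
      exact sigmoid_le_one _)

variable {θ : α → ℝ}

theorem continuous_integral_sigmoid_add_mul (hθ : AEStronglyMeasurable θ μ)
    (hw_int : Integrable w μ) (hw : 0 ≤ᵐ[μ] w) :
    Continuous fun b => ∫ t, sigmoid (b + θ t) * w t ∂μ :=
  continuous_of_dominated
    (fun b => aestronglyMeasurable_sigmoid_comp_mul (hθ.const_add b) hw_int.1)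
    (fun _ => hw.mono fun _ ht => norm_sigmoid_mul_le ht) hw_int
    (Eventually.of_forall fun _ =>
      (continuous_sigmoid.comp (continuous_add_const _)).mul continuous_const)

theorem strictMono_integral_sigmoid_add_mul (hθ : AEStronglyMeasurable θ μ)
    (hw_int : Integrable w μ) (hw : 0 ≤ᵐ[μ] w) (hsupp : 0 < μ (Function.support w)) :
    StrictMono fun b => ∫ t, sigmoid (b + θ t) * w t ∂μ := fun _ _ hb =>
  integral_mul_lt_integral_mul hw hsupp (fun _ => sigmoid_lt (add_lt_add_left hb _))
    (integrable_sigmoid_comp_mul (hθ.const_add _) hw_int)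
    (integrable_sigmoid_comp_mul (hθ.const_add _) hw_int)

theorem tendsto_integral_sigmoid_add_mul {l : Filter ℝ} [l.IsCountablyGenerated] {s : ℝ}
    (hθ : AEStronglyMeasurable θ μ) (hw_int : Integrable w μ) (hw : 0 ≤ᵐ[μ] w)
    (hl : ∀ x, Tendsto (· + x) l l) (hs : Tendsto sigmoid l (𝓝 s)) :
    Tendsto (fun b => ∫ t, sigmoid (b + θ t) * w t ∂μ) l (𝓝 (∫ t, s * w t ∂μ)) :=
  tendsto_integral_filter_of_dominated_convergence w
    (Eventually.of_forall fun b =>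
      aestronglyMeasurable_sigmoid_comp_mul (hθ.const_add b) hw_int.1)
    (Eventually.of_forall fun _ => hw.mono fun _ ht => norm_sigmoid_mul_le ht) hw_int
    (Eventually.of_forall fun t =>
      (hs.comp (hl (θ t))).mul_const (w t))

theorem existsUnique_integral_sigmoid_add_mul_eq (hθ : AEStronglyMeasurable θ μ)
    (hw_int : Integrable w μ) (hw : 0 ≤ᵐ[μ] w) (hsupp : 0 < μ (Function.support w))
    {c : ℝ} (hc₀ : 0 < c) (hc : c < ∫ t, w t ∂μ) :
    ∃! b, ∫ t, sigmoid (b + θ t) * w t ∂μ = c := by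
  have hbot := tendsto_integral_sigmoid_add_mul hθ hw_int hw
    (fun x => tendsto_atBot_add_const_right _ x tendsto_id) tendsto_sigmoid_atBot
  have htop := tendsto_integral_sigmoid_add_mul hθ hw_int hw
    (fun x => tendsto_atTop_add_const_right _ x tendsto_id) tendsto_sigmoid_atTop
  simp only [zero_mul, one_mul, integral_zero] at hbot htop
  obtain ⟨b, hb⟩ := mem_range_of_exists_le_of_exists_ge
    (continuous_integral_sigmoid_add_mul hθ hw_int hw)
    ((hbot.eventually_lt_const hc₀).exists.imp fun _ => le_of_lt)
    ((htop.eventually_const_lt hc).exists.imp fun _ => le_of_lt)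
  exact ⟨b, hb, fun b' hb' =>
    (strictMono_integral_sigmoid_add_mul hθ hw_int hw hsupp).injective (hb'.trans hb.symm)⟩

theorem existsUnique_integral_sub_sigmoid_mul_eq_zero (hθ : AEStronglyMeasurable θ μ)
    (hw_int : Integrable w μ) (hw : 0 ≤ᵐ[μ] w) (hsupp : 0 < μ (Function.support w))
    {β : α → ℝ} (hβ : AEStronglyMeasurable β μ) :
    ∃! b, ∫ t, (sigmoid (β t + θ t) - sigmoid (b + θ t)) * w t ∂μ = 0 := by
  have hβθ := integrable_sigmoid_comp_mul (hβ.add hθ) hw_int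
  have hsub (b : ℝ) : ∫ t, (sigmoid (β t + θ t) - sigmoid (b + θ t)) * w t ∂μ =
      (∫ t, sigmoid (β t + θ t) * w t ∂μ) - ∫ t, sigmoid (b + θ t) * w t ∂μ := by
    simp only [sub_mul]
    exact integral_sub hβθ (integrable_sigmoid_comp_mul (hθ.const_add b) hw_int)
  have hpos : 0 < ∫ t, sigmoid (β t + θ t) * w t ∂μ := by
    simpa using integral_mul_lt_integral_mul (f := 0) hw hsupp (fun t => sigmoid_pos _)
      (by simp) hβθ
  have hlt : ∫ t, sigmoid (β t + θ t) * w t ∂μ < ∫ t, w t ∂μ := by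
    simpa using integral_mul_lt_integral_mul (g := 1) hw hsupp (fun t => sigmoid_lt_one _)
      hβθ (by simpa using hw_int)
  simpa only [hsub, sub_eq_zero, eq_comm (a := ∫ t, sigmoid (β t + θ t) * w t ∂μ)] using
    existsUnique_integral_sigmoid_add_mul_eq hθ hw_int hw hsupp hpos hlt

end LogisticEstimatingEquation

noncomputable def cumHazard (lam0 bet : ℝ → ℝ) (a t : ℝ) : ℝ :=
  ∫ u in (0:ℝ)..t, exp (bet u * a) * lam0 u

section SaturatedModel

variable {lam0 bet : ℝ → ℝ} {τ : ℝ}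

theorem Ssurv_eq_exp_neg_cumHazard (a t : ℝ) :
    Ssurv lam0 bet a t = exp (-cumHazard lam0 bet a t) := rfl

theorem Efun_eq_sigmoid (b t : ℝ) :
    Efun lam0 bet b t = sigmoid (b + (cumHazard lam0 bet 0 t - cumHazard lam0 bet 1 t)) := by
  set x := cumHazard lam0 bet 0 t
  set y := cumHazard lam0 bet 1 t
  have hexp : exp (-(b + (x - y))) = exp (-x) / (exp b * exp (-y)) := by
    rw [← exp_add, ← exp_sub]
    ring_nf
  rw [Efun, Ssurv_eq_exp_neg_cumHazard, Ssurv_eq_exp_neg_cumHazard, sigmoid_def, hexp]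
  field_simp
  ring

theorem Ssurv_le_one (hlam : ∀ t, 0 ≤ lam0 t) (a : ℝ) {t : ℝ} (ht : 0 ≤ t) :
    Ssurv lam0 bet a t ≤ 1 :=
  exp_le_one_iff.2 <| neg_nonpos.2 <| intervalIntegral.integral_nonneg ht fun u _ =>
    mul_nonneg (exp_pos _).le (hlam u)

theorem continuousOn_cumHazard {a : ℝ} (hτ : 0 ≤ τ)
    (h : IntegrableOn (fun u => exp (bet u * a) * lam0 u) (Set.Icc 0 τ)) :
    ContinuousOn (cumHazard lam0 bet a) (Set.Icc 0 τ) := by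
  rw [← Set.uIcc_of_le hτ] at h ⊢
  exact intervalIntegral.continuousOn_primitive_interval h

theorem fdens_nonneg (hlam : ∀ t, 0 ≤ lam0 t) (a t : ℝ) : 0 ≤ fdens lam0 bet a t :=
  mul_nonneg (mul_nonneg (exp_pos _).le (hlam t)) (exp_pos _).le

theorem fdens_pos {t : ℝ} (ht : 0 < lam0 t) (a : ℝ) : 0 < fdens lam0 bet a t :=
  mul_pos (mul_pos (exp_pos _) ht) (exp_pos _)

theorem integrableOn_fdens (hlam : ∀ t, 0 ≤ lam0 t) {a : ℝ} (hτ : 0 ≤ τ)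
    (h : IntegrableOn (fun u => exp (bet u * a) * lam0 u) (Set.Icc 0 τ)) :
    IntegrableOn (fdens lam0 bet a) (Set.Icc 0 τ) :=
  h.mul_bdd (c := 1)
    ((continuous_exp.comp_continuousOn (continuousOn_cumHazard hτ h).neg).aestronglyMeasurable
      measurableSet_Icc)
    ((ae_restrict_iff' measurableSet_Icc).2 <| Eventually.of_forall fun _ ht =>
      (Real.norm_of_nonneg (exp_pos _).le).trans_le (Ssurv_le_one hlam a ht.1))

theorem hfun_eq_integral_sigmoid (hτ : 0 ≤ τ) (b : ℝ) :
    hfun τ lam0 bet b = ∫ t in Set.Icc 0 τ,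
      (sigmoid (bet t + (cumHazard lam0 bet 0 t - cumHazard lam0 bet 1 t)) -
        sigmoid (b + (cumHazard lam0 bet 0 t - cumHazard lam0 bet 1 t))) *
      (fdens lam0 bet 0 t + fdens lam0 bet 1 t) := by
  rw [hfun, intervalIntegral.integral_of_le hτ, Measure.restrict_congr_set Ioc_ae_eq_Icc]
  simp only [Efun_eq_sigmoid]

end SaturatedModel

theorem time_averaged_log_hazard_ratio_exists_unique_general
    (τ : ℝ) (hτ : 0 < τ) (lam0 bet : ℝ → ℝ)
    (hbet_meas : Measurable bet)
    (hlam_nonneg : ∀ t, 0 ≤ lam0 t)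
    (hlam_int : IntegrableOn lam0 (Set.Icc 0 τ))
    (hbetlam_int : IntegrableOn (fun t => Real.exp (bet t) * lam0 t) (Set.Icc 0 τ))
    (hpos : 0 < volume {t | t ∈ Set.Icc 0 τ ∧ 0 < lam0 t}) :
    ∃! b : ℝ, hfun τ lam0 bet b = 0 := by
  have hlam₀ : IntegrableOn (fun u => exp (bet u * 0) * lam0 u) (Set.Icc 0 τ) := by
    simpa using hlam_int
  have hlam₁ : IntegrableOn (fun u => exp (bet u * 1) * lam0 u) (Set.Icc 0 τ) := by
    simpa using hbetlam_int
  have hθ := ((continuousOn_cumHazard hτ.le hlam₀).sub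
    (continuousOn_cumHazard hτ.le hlam₁)).aestronglyMeasurable (μ := volume) measurableSet_Icc
  have hw_nonneg (t : ℝ) : 0 ≤ fdens lam0 bet 0 t + fdens lam0 bet 1 t :=
    add_nonneg (fdens_nonneg hlam_nonneg 0 t) (fdens_nonneg hlam_nonneg 1 t)
  have hsupp : 0 < volume.restrict (Set.Icc 0 τ)
      (Function.support fun t => fdens lam0 bet 0 t + fdens lam0 bet 1 t) := by
    rw [Measure.restrict_apply' measurableSet_Icc]
    refine hpos.trans_le (measure_mono fun t ⟨ht, hlt⟩ => ⟨?_, ht⟩)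
    exact (add_pos_of_pos_of_nonneg (fdens_pos hlt 0) (fdens_nonneg hlam_nonneg 1 t)).ne'
  simp only [hfun_eq_integral_sigmoid hτ.le]
  exact existsUnique_integral_sub_sigmoid_mul_eq_zero hθ
    ((integrableOn_fdens hlam_nonneg hτ.le hlam₀).add (integrableOn_fdens hlam_nonneg hτ.le hlam₁))
    (ae_of_all _ hw_nonneg) hsupp hbet_meas.aestronglyMeasurable

/-- Under the saturated marginal structural model setup, if `λ₀` is strictly positive on a
set of positive Lebesgue measure, then the population full-data estimating equation
`h(β*) = 0` has a unique real solution (the time-averaged log hazard ratio). -/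
theorem time_averaged_log_hazard_ratio_exists_unique
    (τ : ℝ) (hτ : 0 < τ) (lam0 bet : ℝ → ℝ)
    (hlam_meas : Measurable lam0) (hbet_meas : Measurable bet)
    (hlam_nonneg : ∀ t, 0 ≤ lam0 t)
    (hlam_int : IntegrableOn lam0 (Set.Icc 0 τ))
    (hbetlam_int : IntegrableOn (fun t => Real.exp (bet t) * lam0 t) (Set.Icc 0 τ))
    (hpos : 0 < volume {t | t ∈ Set.Icc 0 τ ∧ 0 < lam0 t}) :
    ∃! b : ℝ, hfun τ lam0 bet b = 0 :=
  time_averaged_log_hazard_ratio_exists_unique_general τ hτ lam0 bet hbet_meas hlam_nonneg hlam_int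
    hbetlam_int hpos
end

section
/- Under the saturated marginal structural model setup, if β(t) = β₀ for Lebesgue-a.e. t ∈ [0,τ] (the proportional hazards case), then h(β₀) = 0, and moreover for every t ∈ [0,τ], ∫₀^t (f₀(u)+f₁(u))/(S₀(u)+e^{β₀}S₁(u)) du = ∫₀^t λ₀(u) du; that is, the population solutions recover the true parameters: β* = β₀ and Λ*(t) = Λ₀(t) = ∫₀^t λ₀(u)du. -/
open MeasureTheory Filter

/-- In the proportional hazards case `β(t) = β₀` a.e. on `[0,τ]`, the population solutions
recover the true parameters: `h(β₀) = 0` and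
`Λ*(t) = ∫₀ᵗ (f₀+f₁)/(S₀+e^{β₀}S₁) = ∫₀ᵗ λ₀ = Λ₀(t)` for all `t ∈ [0,τ]`. -/
theorem proportional_hazards_recovers_truth
    (τ : ℝ) (hτ : 0 < τ) (lam0 bet : ℝ → ℝ) (β₀ : ℝ)
    (hlam_meas : Measurable lam0) (hbet_meas : Measurable bet)
    (hlam_nonneg : ∀ t, 0 ≤ lam0 t)
    (hlam_int : IntegrableOn lam0 (Set.Icc 0 τ))
    (hbetlam_int : IntegrableOn (fun t => Real.exp (bet t) * lam0 t) (Set.Icc 0 τ))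
    (hprop : ∀ᵐ t ∂(volume.restrict (Set.Icc (0:ℝ) τ)), bet t = β₀) :
    hfun τ lam0 bet β₀ = 0 ∧
    ∀ t ∈ Set.Icc (0:ℝ) τ,
      (∫ u in (0:ℝ)..t,
          (fdens lam0 bet 0 u + fdens lam0 bet 1 u) /
            (Ssurv lam0 bet 0 u + Real.exp β₀ * Ssurv lam0 bet 1 u))
        = ∫ u in (0:ℝ)..t, lam0 u := by
  have hae : ∀ᵐ u : ℝ, u ∈ Set.Icc (0:ℝ) τ → bet u = β₀ :=
    (ae_restrict_iff' measurableSet_Icc).mp hprop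
  constructor
  · rw [hfun, intervalIntegral.integral_congr_ae (g := fun _ => (0:ℝ)) ?_]
    · simp
    · filter_upwards [hae] with u hu hmem
      rw [Set.uIoc_of_le hτ.le] at hmem
      rw [hu (Set.Ioc_subset_Icc_self hmem), sub_self, zero_mul]
  · intro t ht
    apply intervalIntegral.integral_congr_ae
    filter_upwards [hae] with u hu hmem
    rw [Set.uIoc_of_le ht.1] at hmem
    have hb : bet u = β₀ := hu ⟨hmem.1.le, hmem.2.trans ht.2⟩
    have hpos : 0 < Ssurv lam0 bet 0 u + Real.exp β₀ * Ssurv lam0 bet 1 u :=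
      add_pos (Real.exp_pos _) (mul_pos (Real.exp_pos _) (Real.exp_pos _))
    rw [div_eq_iff hpos.ne']
    simp only [fdens, mul_zero, mul_one, Real.exp_zero, hb]
    ring
end

section
/- Let (Ω, ℱ, μ) be a probability space and let T, C : Ω → ℝ be independent random variables. Let S_c(u) = μ(C > u), assume S_c is continuous on ℝ, and fix t ∈ ℝ with S_c(t) > 0. Then for every bounded measurable ψ : ℝ → ℝ, E[1[T ≤ C]·1[T ≤ t]·ψ(T)/S_c(T)] = E[1[T ≤ t]·ψ(T)]. -/
/-!
By independence the joint law of `(T, C)` is the product of the marginal laws, so Fubini lets us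
integrate out `C` first: for fixed `T = x` the factor `1[x ≤ C]` averages to `μ(C ≥ x)`, which is
`S_c(x)` because a continuous survival function leaves `C` without atoms. This cancels the weight
`1 / S_c(x)`, which is finite for `x ≤ t` since `S_c` is antitone.
-/

open MeasureTheory ProbabilityTheory Set

lemma antitone_measureReal_Ioi {ν : Measure ℝ} [IsFiniteMeasure ν] :
    Antitone fun u => ν.real (Ioi u) :=
  fun _ _ huv => measureReal_mono (Ioi_subset_Ioi huv)

lemma measureReal_Ici_eq_Ioi_of_continuousAt {ν : Measure ℝ} [IsFiniteMeasure ν] {x : ℝ}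
    (hcont : ContinuousAt (fun u => ν.real (Ioi u)) x) : ν.real (Ici x) = ν.real (Ioi x) := by
  refine le_antisymm ?_ (measureReal_mono Ioi_subset_Ici_self)
  refine ge_of_tendsto (hcont.tendsto.mono_left (nhdsWithin_le_nhds (s := Iio x))) ?_
  filter_upwards [self_mem_nhdsWithin] with u (hu : u < x)
  exact measureReal_mono (Ici_subset_Ioi.mpr hu)

lemma integral_ite_le_eq_measureReal_Ici (ν : Measure ℝ) [IsFiniteMeasure ν] (x : ℝ) :
    ∫ y, (if x ≤ y then (1 : ℝ) else 0) ∂ν = ν.real (Ici x) :=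
  integral_indicator_one measurableSet_Ici

lemma ProbabilityTheory.IndepFun.integral_comp_eq_integral_integral {Ω α β E : Type*}
    [MeasurableSpace Ω] [MeasurableSpace α] [MeasurableSpace β]
    [NormedAddCommGroup E] [NormedSpace ℝ E]
    {μ : Measure Ω} [IsFiniteMeasure μ] {X : Ω → α} {Y : Ω → β}
    (hX : Measurable X) (hY : Measurable Y) (hXY : IndepFun X Y μ) {F : α × β → E}
    (hF : Integrable F ((μ.map X).prod (μ.map Y))) :
    ∫ ω, F (X ω, Y ω) ∂μ = ∫ x, ∫ y, F (x, y) ∂(μ.map Y) ∂(μ.map X) := by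
  have hlaw := (indepFun_iff_map_prod_eq_prod_map_map hX.aemeasurable hY.aemeasurable).mp hXY
  rw [← integral_prod F hF, ← hlaw,
    integral_map (hX.prodMk hY).aemeasurable (hlaw ▸ hF.aestronglyMeasurable)]

lemma ProbabilityTheory.IndepFun.integral_ite_le_mul {Ω : Type*} [MeasurableSpace Ω]
    {μ : Measure Ω} [IsFiniteMeasure μ] {T C : Ω → ℝ} (hT : Measurable T) (hC : Measurable C)
    (hTC : IndepFun T C μ) {h : ℝ → ℝ} (hh : Integrable h (μ.map T)) :
    ∫ ω, (if T ω ≤ C ω then (1 : ℝ) else 0) * h (T ω) ∂μ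
      = ∫ x, (μ.map C).real (Ici x) * h x ∂(μ.map T) := by
  have hF : Integrable (fun p : ℝ × ℝ => (if p.1 ≤ p.2 then (1 : ℝ) else 0) * h p.1)
      ((μ.map T).prod (μ.map C)) := by
    refine (hh.norm.comp_fst _).mono' ?_ (ae_of_all _ fun p => ?_)
    · exact ((measurable_const.ite (measurableSet_le measurable_fst measurable_snd)
        measurable_const).aestronglyMeasurable).mul (hh.aestronglyMeasurable.comp_fst)
    · split_ifs <;> simp
  rw [hTC.integral_comp_eq_integral_integral hT hC hF]
  simp_rw [integral_mul_const, integral_ite_le_eq_measureReal_Ici]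

lemma integrable_ite_le_mul_div_of_antitone {ν : Measure ℝ} [IsFiniteMeasure ν] {S ψ : ℝ → ℝ}
    {t M : ℝ} (hS : Antitone S) (hSt : 0 < S t) (hψ : Measurable ψ) (hM : ∀ x, |ψ x| ≤ M) :
    Integrable (fun x => (if x ≤ t then (1 : ℝ) else 0) * (ψ x / S x)) ν := by
  refine Integrable.of_bound ((measurable_const.ite measurableSet_Iic measurable_const).mul
    (hψ.div hS.measurable)).aestronglyMeasurable (M / S t) (ae_of_all _ fun x => ?_)
  have hM0 : 0 ≤ M := (abs_nonneg _).trans (hM 0)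
  by_cases hx : x ≤ t
  · have hpos := hSt.trans_le (hS hx)
    simp only [hx, if_true, one_mul, Real.norm_eq_abs, abs_div, abs_of_pos hpos]
    exact div_le_div₀ hM0 (hM x) hSt (hS hx)
  · simp only [hx, if_false, zero_mul, norm_zero]
    positivity

/-- Unbiasedness of inverse probability of censoring weighting: for independent `T ⊥ C`,
`S_c(u) = μ(C > u)` continuous, and `t` with `S_c(t) > 0`, for every bounded measurable `ψ`,
`E[1[T ≤ C] 1[T ≤ t] ψ(T)/S_c(T)] = E[1[T ≤ t] ψ(T)]`. -/
theorem ipcw_unbiased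
    {Ω : Type*} [MeasurableSpace Ω] (μ : Measure Ω) [IsProbabilityMeasure μ]
    (T C : Ω → ℝ) (hT_meas : Measurable T) (hC_meas : Measurable C)
    (hindep : IndepFun T C μ)
    (Sc : ℝ → ℝ) (hSc : Sc = fun u => (μ {ω | u < C ω}).toReal)
    (hSc_cont : Continuous Sc)
    (t : ℝ) (hSct : 0 < Sc t)
    (ψ : ℝ → ℝ) (hψ_meas : Measurable ψ) (hψ_bdd : ∃ M : ℝ, ∀ x, |ψ x| ≤ M) :
    (∫ ω, (if T ω ≤ C ω then (1:ℝ) else 0) * (if T ω ≤ t then (1:ℝ) else 0)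
        * ψ (T ω) / Sc (T ω) ∂μ)
      = ∫ ω, (if T ω ≤ t then (1:ℝ) else 0) * ψ (T ω) ∂μ := by
  obtain ⟨M, hM⟩ := hψ_bdd
  have hSc_law : Sc = fun u => (μ.map C).real (Ioi u) := by
    ext u
    rw [hSc, map_measureReal_apply hC_meas measurableSet_Ioi]
    rfl
  have hSc_Ici (x : ℝ) : (μ.map C).real (Ici x) = Sc x := by
    rw [hSc_law] at hSc_cont ⊢
    exact measureReal_Ici_eq_Ioi_of_continuousAt hSc_cont.continuousAt
  have hSc_anti : Antitone Sc := hSc_law ▸ antitone_measureReal_Ioi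
  have h_ind : Measurable fun x : ℝ => if x ≤ t then (1:ℝ) else 0 :=
    measurable_const.ite measurableSet_Iic measurable_const
  have hw := integrable_ite_le_mul_div_of_antitone (ν := μ.map T) hSc_anti hSct hψ_meas hM
  set w : ℝ → ℝ := fun x => (if x ≤ t then (1:ℝ) else 0) * (ψ x / Sc x)
  calc _ = ∫ ω, (if T ω ≤ C ω then (1:ℝ) else 0) * w (T ω) ∂μ := by
        simp only [w, mul_div_assoc, mul_assoc]
    _ = ∫ x, Sc x * w x ∂(μ.map T) := by
        simp only [hindep.integral_ite_le_mul hT_meas hC_meas hw, hSc_Ici]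
    _ = ∫ x, (if x ≤ t then (1:ℝ) else 0) * ψ x ∂(μ.map T) := by
        refine integral_congr_ae (ae_of_all _ fun x => ?_)
        by_cases hx : x ≤ t
        · have hSc_ne : Sc x ≠ 0 := (hSct.trans_le (hSc_anti hx)).ne'
          simp only [w, hx, if_true]
          field_simp
        · simp [w, hx]
    _ = _ := integral_map hT_meas.aemeasurable (h_ind.mul hψ_meas).aestronglyMeasurable
end

section
/- Let (Ω, ℱ, μ) be a probability space with Ω a standard Borel space, let 𝔪 ⊆ ℱ be a sub-σ-algebra, let A : Ω → ℝ be measurable with values in {0,1}, and let W : Ω → ℝ be bounded and measurable. Assume A and W are conditionally independent given 𝔪, and let p be a version of the conditional expectation E[A | 𝔪] such that p ≥ ε almost surely for some ε > 0. Then E[A·W/p] = E[W]. -/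
open MeasureTheory ProbabilityTheory

/-- Unbiasedness of inverse probability of treatment weighting: if `A ∈ {0,1}` and the
bounded `W` are conditionally independent given the sub-σ-algebra `m` (exchangeability),
and `p` is a version of `E[A | m]` (the propensity score) bounded below by `ε > 0`
(strict positivity), then `E[A W / p] = E[W]`. -/
theorem iptw_unbiased
    {Ω : Type*} (m : MeasurableSpace Ω) {mΩ : MeasurableSpace Ω} [StandardBorelSpace Ω]
    (μ : Measure Ω) [IsProbabilityMeasure μ]
    (hm : m ≤ mΩ)
    (A W : Ω → ℝ) (hA_meas : Measurable A) (hA_val : ∀ ω, A ω = 0 ∨ A ω = 1)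
    (hW_meas : Measurable W) (hW_bdd : ∃ M : ℝ, ∀ ω, |W ω| ≤ M)
    (hci : CondIndepFun m hm A W μ)
    (p : Ω → ℝ) (hp : p =ᵐ[μ] μ[A|m])
    (ε : ℝ) (hε : 0 < ε) (hpε : ∀ᵐ ω ∂μ, ε ≤ p ω) :
    (∫ ω, A ω * W ω / p ω ∂μ) = ∫ ω, W ω ∂μ := by
  classical
  letI : MeasurableSpace Ω := mΩ
  obtain ⟨M, hM⟩ := hW_bdd
  have hA' : Measurable[mΩ] A := hA_meas
  have hW' : Measurable[mΩ] W := hW_meas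
  set q : Ω → ℝ := μ[A|m] with hq_def
  have hqm : StronglyMeasurable[m] q := stronglyMeasurable_condExp
  have hq_meas : Measurable[mΩ] q := (hqm.mono hm).measurable
  have hqε : ∀ᵐ ω ∂μ, ε ≤ q ω := by
    filter_upwards [hpε, hp] with ω h1 h2
    rwa [h2] at h1
  -- the treated set
  set S : Set Ω := A ⁻¹' {1} with hS_def
  have hS_meas : MeasurableSet[mΩ] S := hA' (measurableSet_singleton 1)
  have hSA : Set.indicator S (fun _ => (1 : ℝ)) = A := by
    funext ω
    rcases hA_val ω with h | h <;>
      simp [Set.indicator_apply, hS_def, Set.mem_preimage, h]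
  -- conditional independence in indicator form
  rw [condIndepFun_iff_condExp_inter_preimage_eq_mul (m' := m) (hm' := hm) (μ := μ) hA' hW'] at hci
  -- the weight function
  set g : Ω → ℝ := fun ω => A ω / q ω with hg_def
  have hg_meas : Measurable[mΩ] g := hA'.div hq_meas
  have hg_bdd : ∀ᵐ ω ∂μ, ‖g ω‖ ≤ ε⁻¹ := by
    filter_upwards [hqε] with ω hq
    have hq0 : 0 < q ω := lt_of_lt_of_le hε hq
    have hAle : |A ω| ≤ 1 := by rcases hA_val ω with h | h <;> simp [h]
    have : |g ω| = |A ω| / q ω := by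
      rw [hg_def]; rw [abs_div, abs_of_pos hq0]
    rw [Real.norm_eq_abs, this]
    calc |A ω| / q ω ≤ 1 / ε := div_le_div₀ zero_le_one hAle hε hq
      _ = ε⁻¹ := one_div ε
  have hg_int : Integrable g μ :=
    (integrable_const (μ := μ) ε⁻¹).mono' hg_meas.aestronglyMeasurable hg_bdd
  -- the key computation: on every set in σ(W), the integral of g is the measure
  have key : ∀ t : Set ℝ, MeasurableSet t →
      ∫ ω in W ⁻¹' t, g ω ∂μ = (μ (W ⁻¹' t)).toReal := by
    intro t ht
    set T : Set Ω := W ⁻¹' t with hT_def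
    have hT_meas : MeasurableSet[mΩ] T := hW' ht
    set ind : Ω → ℝ := Set.indicator (S ∩ T) (fun _ => (1 : ℝ)) with hind_def
    have hind_meas : Measurable[mΩ] ind :=
      measurable_const.indicator (hS_meas.inter hT_meas)
    have hind_int : Integrable ind μ :=
      (integrable_const (μ := μ) (1 : ℝ)).indicator (hS_meas.inter hT_meas)
    set qinv : Ω → ℝ := fun ω => (q ω)⁻¹ with hqinv_def
    have hqinv_m : StronglyMeasurable[m] qinv :=
      (hqm.measurable.inv).stronglyMeasurable
    have h_eq : ∀ ω, Set.indicator T g ω = (qinv * ind) ω := by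
      intro ω
      rcases hA_val ω with h | h
      · have hωS : ω ∉ S := by simp [hS_def, Set.mem_preimage, h]
        by_cases hωT : ω ∈ T <;>
          simp [Set.indicator_apply, hωT, hωS, hg_def, h, hind_def, hqinv_def]
      · have hωS : ω ∈ S := by simp [hS_def, Set.mem_preimage, h]
        by_cases hωT : ω ∈ T <;>
          simp [Set.indicator_apply, hωT, hωS, hg_def, h, hind_def, hqinv_def,
            div_eq_mul_inv]
    have h_prod_int : Integrable (qinv * ind) μ := by
      refine (integrable_const (μ := μ) ε⁻¹).mono'
        ((hq_meas.inv.mul hind_meas).aestronglyMeasurable) ?_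
      filter_upwards [hqε] with ω hq
      have hq0 : 0 < q ω := lt_of_lt_of_le hε hq
      have : |ind ω| ≤ 1 := by
        rw [hind_def]
        by_cases hω : ω ∈ S ∩ T <;> simp [Set.indicator_apply, hω]
      calc ‖(qinv * ind) ω‖ = |(q ω)⁻¹| * |ind ω| := by
            simp [Real.norm_eq_abs, abs_mul, hqinv_def, abs_inv]
        _ ≤ |(q ω)⁻¹| * 1 := by
            exact mul_le_mul_of_nonneg_left this (abs_nonneg _)
        _ = (q ω)⁻¹ := by rw [mul_one, abs_of_pos (inv_pos.mpr hq0)]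
        _ ≤ ε⁻¹ := by exact inv_anti₀ hε hq
    -- pull-out property
    have h_pull : μ[qinv * ind|m] =ᵐ[μ] qinv * μ[ind|m] :=
      condExp_mul_of_stronglyMeasurable_left hqinv_m h_prod_int hind_int
    -- conditional independence
    have h_ci : μ[ind|m] =ᵐ[μ]
        fun ω => q ω * (μ[Set.indicator T (fun _ => (1:ℝ))|m]) ω := by
      have := hci {1} t (measurableSet_singleton 1) ht
      have hST : A ⁻¹' {1} ∩ W ⁻¹' t = S ∩ T := rfl
      rw [hST, hSA] at this
      exact this
    calc ∫ ω in T, g ω ∂μ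
        = ∫ ω, Set.indicator T g ω ∂μ := (integral_indicator (μ := μ) hT_meas).symm
      _ = ∫ ω, (qinv * ind) ω ∂μ := by
          exact integral_congr_ae (Filter.Eventually.of_forall h_eq)
      _ = ∫ ω, (μ[qinv * ind|m]) ω ∂μ := (integral_condExp hm).symm
      _ = ∫ ω, (μ[Set.indicator T (fun _ => (1:ℝ))|m]) ω ∂μ := by
          refine integral_congr_ae ?_
          filter_upwards [h_pull, h_ci, hqε] with ω h1 h2 hq
          have hq0 : q ω ≠ 0 := ne_of_gt (lt_of_lt_of_le hε hq)
          rw [h1]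
          simp only [Pi.mul_apply, hqinv_def]
          rw [h2]
          field_simp
      _ = ∫ ω, Set.indicator T (fun _ => (1:ℝ)) ω ∂μ := integral_condExp hm
      _ = (μ T).toReal := integral_indicator_one (μ := μ) hT_meas
  -- σ-algebra generated by W
  set mW : MeasurableSpace Ω := MeasurableSpace.comap W inferInstance with hmW_def
  have hmW : mW ≤ mΩ := hW'.comap_le
  letI : MeasurableSpace Ω := mΩ
  have hW_mW : StronglyMeasurable[mW] W :=
    (Measurable.of_comap_le le_rfl).stronglyMeasurable
  -- condexp of g given σ(W) is 1
  have h_one : (fun _ : Ω => (1 : ℝ)) =ᵐ[μ] μ[g|mW] := by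
    refine ae_eq_condExp_of_forall_setIntegral_eq hmW hg_int
      (fun s _ _ => (integrable_const (μ := μ) (1:ℝ)).integrableOn) ?_
      ⟨fun _ => (1:ℝ), stronglyMeasurable_const, Filter.EventuallyEq.rfl⟩
    rintro s ⟨t, ht, rfl⟩ -
    rw [key t ht, setIntegral_const, smul_eq_mul, mul_one, Measure.real]
  -- the product W * g
  have hW_int : Integrable W μ :=
    (integrable_const (μ := μ) M).mono' hW'.aestronglyMeasurable
      (Filter.Eventually.of_forall fun ω => by rw [Real.norm_eq_abs]; exact hM ω)
  have hWg_int : Integrable (W * g) μ := by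
    refine (integrable_const (μ := μ) (M * ε⁻¹)).mono'
      (hW'.mul hg_meas).aestronglyMeasurable ?_
    filter_upwards [hg_bdd] with ω hg
    calc ‖(W * g) ω‖ = |W ω| * |g ω| := by simp [Real.norm_eq_abs, abs_mul]
      _ ≤ M * ε⁻¹ := by
          refine mul_le_mul (hM ω) (by rwa [Real.norm_eq_abs] at hg)
            (abs_nonneg _) ((abs_nonneg (W ω)).trans (hM ω))
  have h_pullW : μ[W * g|mW] =ᵐ[μ] W * μ[g|mW] :=
    condExp_mul_of_stronglyMeasurable_left hW_mW hWg_int hg_int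
  -- integral of W * g is the integral of W
  have h_main : ∫ ω, W ω * g ω ∂μ = ∫ ω, W ω ∂μ := by
    calc ∫ ω, W ω * g ω ∂μ
        = ∫ ω, (μ[W * g|mW]) ω ∂μ := (integral_condExp hmW).symm
      _ = ∫ ω, W ω ∂μ := by
          refine integral_congr_ae ?_
          filter_upwards [h_pullW, h_one.symm] with ω h1 h2
          rw [h1, Pi.mul_apply, h2, mul_one]
  -- conclude
  rw [← h_main]
  refine integral_congr_ae ?_
  filter_upwards [hp, hpε] with ω h1 h2
  have hq0 : p ω ≠ 0 := ne_of_gt (lt_of_lt_of_le hε h2)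
  rw [hg_def]
  simp only [h1.symm]
  rw [div_eq_mul_inv, div_eq_mul_inv]
  ring
end
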